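/- On an almost complex manifold with a pair of Norden metrics g and g̃(X,Y)=g(X,JY), the structural tensors satisfy F̃(x,y,z) = ½{F(Jy,z,x) + F(y,z,Jx) + F(z,Jx,y) + F(Jz,x,y)}, where F and F̃ are defined via the Levi-Civita connections of g and g̃ respectively. -/

import Mathlib

/-!
Both connections are torsion-free for the same bracket, so their difference `Φ = ∇̃ - ∇` is
symmetric. Comparing the metric condition of `∇̃` for `g̃ = g(·, J·)` with that of `∇` for `g`
gives `g(Φ(x,y), Jz) + g(Φ(x,z), Jy) = F(x,z,y)`, and the Christoffel permutation trick solves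
this for `g(Φ(x,y), Jz)`. Since `F̃(x,y,z) = F(x,y,Jz) + g(Φ(x,Jy), Jz) + g(Φ(x,y), z)`, the
identities `F(x,y,z) = F(x,z,y)` and `F(x,Jy,z) = -F(x,y,Jz)` turn the result into the stated
formula.
-/

section BiadditiveForm

variable {V R : Type*} [AddCommGroup V] [CommRing R] {g : V → V → R}

theorem map_neg_left_of_map_add_left (hg : ∀ x y z, g (x + y) z = g x z + g y z) (x z : V) :
    g (-x) z = -g x z :=
  map_neg (AddMonoidHom.mk' (g · z) fun x y => hg x y z) x

theorem map_neg_right_of_map_add_left (hg : ∀ x y z, g (x + y) z = g x z + g y z)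
    (hsymm : ∀ x y, g x y = g y x) (x z : V) : g z (-x) = -g z x := by
  rw [hsymm, map_neg_left_of_map_add_left hg, hsymm]

theorem map_sub_left_of_map_add_left (hg : ∀ x y z, g (x + y) z = g x z + g y z) (x y z : V) :
    g (x - y) z = g x z - g y z :=
  map_sub (AddMonoidHom.mk' (g · z) fun x y => hg x y z) x y

theorem apply_map_right_eq_of_norden {F : Type*} [FunLike F V V] [AddMonoidHomClass F V V]
    {J : F} (hg : ∀ x y z, g (x + y) z = g x z + g y z) (hsymm : ∀ x y, g x y = g y x)
    (hJJ : ∀ x, J (J x) = -x) (hNorden : ∀ x y, g (J x) (J y) = -g x y) (x y : V) :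
    g x (J y) = g (J x) y := by
  have h := hNorden x (J y)
  rw [hJJ, hsymm, map_neg_left_of_map_add_left hg, hsymm y] at h
  exact (neg_injective h).symm

end BiadditiveForm

theorem two_nsmul_eq_of_symm_of_add_swap {α M : Type*} [AddCommGroup M] {A B : α → α → α → M}
    (hA : ∀ x y z, A x y z = A y x z) (hB : ∀ x y z, A x y z + A x z y = B x y z)
    (x y z : α) : 2 • A x y z = B x y z + B y x z - B z x y := by
  rw [← hB, ← hB, ← hB, hA y x, hA z x, hA z y]
  abel

theorem eq_one_div_two_smul_of_two_mul_eq {R : Type*} [Ring R] [Algebra ℝ R] {a b : R}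
    (h : 2 * a = b) : a = ((1 : ℝ) / 2) • b := by
  rw [← h, two_mul, ← two_smul ℝ a, smul_smul]
  norm_num

section StructureTensor

variable {V R F : Type*} [AddCommGroup V] [FunLike F V V]

def structureTensor (g : V → V → R) (J : F) (nabla : V → V → V) (x y z : V) : R :=
  g (nabla x (J y) - J (nabla x y)) z

def connectionDiffForm (g : V → V → R) (J : F) (nabla nabla' : V → V → V) (x y z : V) : R :=
  g (nabla' x y - nabla x y) (J z)

variable {g : V → V → R} {J : F} {nabla nabla' : V → V → V}

theorem connectionDiffForm_comm {bracket : V → V → V}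
    (h_tor : ∀ x y, nabla x y - nabla y x = bracket x y)
    (h'_tor : ∀ x y, nabla' x y - nabla' y x = bracket x y) (x y z : V) :
    connectionDiffForm g J nabla nabla' x y z = connectionDiffForm g J nabla nabla' y x z := by
  have h := h'_tor x y
  rw [← h_tor x y, sub_eq_sub_iff_sub_eq_sub] at h
  rw [connectionDiffForm, connectionDiffForm, h]

variable [CommRing R] [AddMonoidHomClass F V V] {D : V → R → R}

theorem structureTensor_comm (hg : ∀ x y z, g (x + y) z = g x z + g y z)
    (hsymm : ∀ x y, g x y = g y x) (hJJ : ∀ x, J (J x) = -x)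
    (hNorden : ∀ x y, g (J x) (J y) = -g x y)
    (h_metric : ∀ x y z, D x (g y z) = g (nabla x y) z + g y (nabla x z)) (x y z : V) :
    structureTensor g J nabla x y z = structureTensor g J nabla x z y := by
  have hJ := apply_map_right_eq_of_norden hg hsymm hJJ hNorden
  have h := h_metric x y (J z)
  rw [hJ, h_metric] at h
  simp only [structureTensor, map_sub_left_of_map_add_left hg, hJ] at h ⊢
  linear_combination h + hsymm y (nabla x (J z)) - hsymm (J y) (nabla x z) - hJ (nabla x z) y

theorem structureTensor_apply_J (hg : ∀ x y z, g (x + y) z = g x z + g y z)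
    (hsymm : ∀ x y, g x y = g y x) (hJJ : ∀ x, J (J x) = -x)
    (hNorden : ∀ x y, g (J x) (J y) = -g x y)
    (h_add2 : ∀ x y z, nabla x (y + z) = nabla x y + nabla x z) (x y z : V) :
    structureTensor g J nabla x (J y) z = -structureTensor g J nabla x y (J z) := by
  have h_neg : nabla x (-y) = -nabla x y := map_neg (AddMonoidHom.mk' (nabla x) (h_add2 x)) y
  simp only [structureTensor, map_sub_left_of_map_add_left hg, map_neg_left_of_map_add_left hg,
    apply_map_right_eq_of_norden hg hsymm hJJ hNorden, hJJ, h_neg]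
  ring

theorem connectionDiffForm_add_swap (hg : ∀ x y z, g (x + y) z = g x z + g y z)
    (hsymm : ∀ x y, g x y = g y x) (hJJ : ∀ x, J (J x) = -x)
    (hNorden : ∀ x y, g (J x) (J y) = -g x y) {gt : V → V → R} (hgt : ∀ x y, gt x y = g x (J y))
    (h_metric : ∀ x y z, D x (g y z) = g (nabla x y) z + g y (nabla x z))
    (h'_metric : ∀ x y z, D x (gt y z) = gt (nabla' x y) z + gt y (nabla' x z)) (x y z : V) :
    connectionDiffForm g J nabla nabla' x y z + connectionDiffForm g J nabla nabla' x z y =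
      structureTensor g J nabla x z y := by
  have hJ := apply_map_right_eq_of_norden hg hsymm hJJ hNorden
  have h := h'_metric x y z
  rw [hgt, hgt, hgt, h_metric] at h
  simp only [connectionDiffForm, structureTensor, map_sub_left_of_map_add_left hg, hJ] at h ⊢
  linear_combination -h + hsymm y (nabla x (J z)) - hsymm (J y) (nabla' x z) - hJ (nabla' x z) y

theorem structureTensor_twin_eq (hg : ∀ x y z, g (x + y) z = g x z + g y z)
    (hsymm : ∀ x y, g x y = g y x) (hJJ : ∀ x, J (J x) = -x)
    (hNorden : ∀ x y, g (J x) (J y) = -g x y) {gt : V → V → R} (hgt : ∀ x y, gt x y = g x (J y))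
    (x y z : V) :
    structureTensor gt J nabla' x y z =
      structureTensor g J nabla x y (J z) + connectionDiffForm g J nabla nabla' x (J y) z -
        connectionDiffForm g J nabla nabla' x y (J z) := by
  simp only [connectionDiffForm, structureTensor, hgt, map_sub_left_of_map_add_left hg,
    apply_map_right_eq_of_norden hg hsymm hJJ hNorden, hJJ, map_neg_left_of_map_add_left hg,
    map_neg_right_of_map_add_left hg hsymm]
  ring

end StructureTensor

theorem stmt_4
    {R : Type*} [CommRing R] [Algebra ℝ R]
    {V : Type*} [AddCommGroup V] [Module R V]
    (D : V → R → R) (bracket : V → V → V)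
    (g : V → V → R) (J : V →ₗ[R] V) (nabla : V → V → V)
    -- `g` is a symmetric bilinear Norden metric, `J` an almost complex structure
    (hg_addl : ∀ x y z, g (x + y) z = g x z + g y z)
    (hg_sym : ∀ x y, g x y = g y x)
    (hJJ : ∀ x, J (J x) = -x)
    (hNorden : ∀ x y, g (J x) (J y) = - g x y)
    -- `nabla` is the Levi-Civita connection of `g`
    (h_add2 : ∀ x y z, nabla x (y + z) = nabla x y + nabla x z)
    (h_tor : ∀ x y, nabla x y - nabla y x = bracket x y)
    (h_metric : ∀ x y z, D x (g y z) = g (nabla x y) z + g y (nabla x z))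
    -- the structural tensor `F(X,Y,Z) = g((∇_X J)Y, Z)`
    (F : V → V → V → R)
    (hF : ∀ x y z, F x y z = g (nabla x (J y) - J (nabla x y)) z)
    -- the associated Norden metric `g̃(X,Y) = g(X,JY)` and its Levi-Civita connection
    (gt : V → V → R) (hgt : ∀ x y, gt x y = g x (J y))
    (nabla' : V → V → V)
    (h'_tor : ∀ x y, nabla' x y - nabla' y x = bracket x y)
    (h'_metric : ∀ x y z, D x (gt y z) = gt (nabla' x y) z + gt y (nabla' x z))
    -- the structural tensor `F̃(X,Y,Z) = g̃((∇̃_X J)Y, Z)`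
    (Ft : V → V → V → R)
    (hFt : ∀ x y z, Ft x y z = gt (nabla' x (J y) - J (nabla' x y)) z) :
    ∀ x y z, Ft x y z
      = ((1 : ℝ)/2) • (F (J y) z x + F y z (J x) + F z (J x) y + F (J z) x y) := by
  have hF' : F = structureTensor g J nabla := funext fun x => funext fun y => funext (hF x y)
  have hFt' : Ft = structureTensor gt J nabla' := funext fun x => funext fun y => funext (hFt x y)
  subst hF' hFt'
  have hΦ := two_nsmul_eq_of_symm_of_add_swap (connectionDiffForm_comm h_tor h'_tor)
    (connectionDiffForm_add_swap hg_addl hg_sym hJJ hNorden hgt h_metric h'_metric)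
  have hcomm := structureTensor_comm hg_addl hg_sym hJJ hNorden h_metric
  have hJ := structureTensor_apply_J hg_addl hg_sym hJJ hNorden h_add2
  intro x y z
  apply eq_one_div_two_smul_of_two_mul_eq
  rw [structureTensor_twin_eq hg_addl hg_sym hJJ hNorden hgt]
  linear_combination hΦ x (J y) z - hΦ x y (J z) + hcomm (J z) y x + hcomm x z (J y) + hJ x y z
    - hcomm x (J z) y - hcomm z (J y) x - hJ z x y - hJ y z x
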